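/- Error vectors under one-layer lifting: Assume the loss ℓ and the activation σ are differentiable. Given data S, a fully-connected NN, a one-layer deeper NN′, a parameter θ of NN, and any θ′ ∈ T_S(θ) with layer-linearization slope vector λ, for every x ∈ S_x the error vectors satisfy: z^[l]_{θ′}(x) = z^[l]_θ(x) for l ∈ [q−1] ∪ [q+1 : L], z^[q̂]_{θ′}(x) = (W′^[q+1])^⊤ (z^[q+1]_θ(x) ∘ g^[q+1]_θ(x)), and z^[q]_{θ′}(x) = (W′^[q̂])^⊤ (z^[q̂]_{θ′}(x) ∘ λ), where ∘ denotes the entrywise (Hadamard) product. -/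
import Mathlib


/-!
Common formalization of fully-connected neural networks, one-layer deeper
networks, and the critical lifting operator from
"Embedding Principle in Depth for the Loss Landscape Analysis of Deep Neural Networks".

Vectors are modelled as functions `ℕ → ℝ` (coordinates beyond the layer width
are irrelevant and feature vectors are zero-padded there); parameters assign to
each layer index `l ≥ 1` a weight "matrix" `ℕ → ℕ → ℝ` and a bias `ℕ → ℝ`.
-/

/-- Parameters of a network: for each layer `l ≥ 1` a weight matrix and a bias. -/
abbrev NNParams : Type := ℕ → (ℕ → ℕ → ℝ) × (ℕ → ℝ)

/-- Feature vectors `f^[l]_θ(x)`: `f^[0]_θ(x) = x` (truncated to the input width),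
`f^[l]_θ(x) = σ(W^[l] f^[l-1]_θ(x) + b^[l])` for `1 ≤ l ≤ L-1`, and no activation
at the output layer `L`.  Coordinates outside the layer width are `0`. -/
noncomputable def feat (σ : ℝ → ℝ) (m : ℕ → ℕ) (L : ℕ) (θ : NNParams) (x : ℕ → ℝ) :
    ℕ → ℕ → ℝ
  | 0 => fun i => if i < m 0 then x i else 0
  | l + 1 => fun i =>
      if i < m (l + 1) then
        (if l + 1 = L then id else σ)
          ((∑ j ∈ Finset.range (m l), (θ (l + 1)).1 i j * feat σ m L θ x l j)
            + (θ (l + 1)).2 i)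
      else 0

/-- Output `f_θ(x) = W^[L] f^[L-1]_θ(x) + b^[L]` of the network. -/
noncomputable def nnOut (σ : ℝ → ℝ) (m : ℕ → ℕ) (L : ℕ) (θ : NNParams) (x : ℕ → ℝ) :
    ℕ → ℝ :=
  feat σ m L θ x L

/-- Pre-activation of layer `l ≥ 1`: `W^[l] f^[l-1]_θ(x) + b^[l]`. -/
noncomputable def preAct (σ : ℝ → ℝ) (m : ℕ → ℕ) (L : ℕ) (θ : NNParams) (x : ℕ → ℝ)
    (l i : ℕ) : ℝ :=
  (∑ j ∈ Finset.range (m (l - 1)), (θ l).1 i j * feat σ m L θ x (l - 1) j) + (θ l).2 i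

/-- `(a,b)` is an affine subdomain of `σ` with slope `lam ≠ 0` and intercept `mu`. -/
def AffineSubdomain (σ : ℝ → ℝ) (a b lam mu : ℝ) : Prop :=
  a < b ∧ lam ≠ 0 ∧ ∀ t ∈ Set.Ioo a b, σ t = lam * t + mu

/-- Widths of the one-layer deeper network obtained by inserting a hidden layer of
width `mh` between layers `q` and `q+1` (the inserted layer gets index `q+1` and
all later layers are shifted up by one). -/
def insertWidth (m : ℕ → ℕ) (q mh : ℕ) : ℕ → ℕ :=
  fun l => if l ≤ q then m l else if l = q + 1 then mh else m (l - 1)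

/-- Local-in-layer condition: all layers of the deeper network other than the inserted
layer (deep index `q+1`) and the following layer (deep index `q+2`) are inherited
from the shallow network. -/
def LocalInLayer (m : ℕ → ℕ) (L q : ℕ) (θ θ' : NNParams) : Prop :=
  (∀ l, 1 ≤ l → l ≤ q →
    (∀ i < m l, ∀ j < m (l - 1), (θ' l).1 i j = (θ l).1 i j) ∧
    (∀ i < m l, (θ' l).2 i = (θ l).2 i)) ∧
  (∀ l, q + 3 ≤ l → l ≤ L + 1 →
    (∀ i < m (l - 1), ∀ j < m (l - 2), (θ' l).1 i j = (θ (l - 1)).1 i j) ∧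
    (∀ i < m (l - 1), (θ' l).2 i = (θ (l - 1)).2 i))

/-- Output preserving condition:
`W'^[q+1] diag(λ) W'^[q̂] = W^[q+1]` and
`W'^[q+1] diag(λ) b'^[q̂] + W'^[q+1] μ + b'^[q+1] = b^[q+1]`
(in deep indexing, `W'^[q̂] = (θ' (q+1)).1` and `W'^[q+1] = (θ' (q+2)).1`). -/
def OutputPres (m : ℕ → ℕ) (q mh : ℕ) (θ θ' : NNParams) (lam mu : ℕ → ℝ) : Prop :=
  (∀ i < m (q + 1), ∀ k < m q,
    (∑ j ∈ Finset.range mh, (θ' (q + 2)).1 i j * (lam j * (θ' (q + 1)).1 j k))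
      = (θ (q + 1)).1 i k) ∧
  (∀ i < m (q + 1),
    (∑ j ∈ Finset.range mh, (θ' (q + 2)).1 i j * (lam j * (θ' (q + 1)).2 j + mu j))
      + (θ' (q + 2)).2 i = (θ (q + 1)).2 i)

/-- `θ'` is a one-layer lifting of `θ` with explicit slope/intercept vectors
`lam, mu` and affine subdomains `(aa j, bb j)`: the local-in-layer, layer
linearization and output preserving conditions. -/
def LiftWitness (σ : ℝ → ℝ) (m : ℕ → ℕ) (L q mh : ℕ) {n : ℕ}
    (S : Fin n → (ℕ → ℝ) × (ℕ → ℝ)) (θ θ' : NNParams) (lam mu aa bb : ℕ → ℝ) : Prop :=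
  LocalInLayer m L q θ θ' ∧
  (∀ j < mh, AffineSubdomain σ (aa j) (bb j) (lam j) (mu j) ∧
    ∀ i : Fin n,
      preAct σ (insertWidth m q mh) (L + 1) θ' (S i).1 (q + 1) j ∈ Set.Ioo (aa j) (bb j)) ∧
  OutputPres m q mh θ θ' lam mu

/-- The one-layer lifting operator `T_S(θ)`: the set of all parameters of the
one-layer deeper network satisfying the local-in-layer, layer linearization and
output preserving conditions. -/
def liftSet (σ : ℝ → ℝ) (m : ℕ → ℕ) (L q mh : ℕ) {n : ℕ}
    (S : Fin n → (ℕ → ℝ) × (ℕ → ℝ)) (θ : NNParams) : Set NNParams :=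
  { θ' | ∃ lam mu aa bb : ℕ → ℝ, LiftWitness σ m L q mh S θ θ' lam mu aa bb }

/-- Empirical risk `R_S(θ) = (1/n) ∑ᵢ ℓ(f_θ(xᵢ), yᵢ)`. -/
noncomputable def empRisk (σ : ℝ → ℝ) (ℓ : (ℕ → ℝ) → (ℕ → ℝ) → ℝ) (m : ℕ → ℕ) (L : ℕ)
    {n : ℕ} (S : Fin n → (ℕ → ℝ) × (ℕ → ℝ)) (θ : NNParams) : ℝ :=
  (1 / (n : ℝ)) * ∑ i : Fin n, ℓ (nnOut σ m L θ (S i).1) (S i).2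

/-- Update a single weight entry `W^[l]_{ij}` of the parameters. -/
def updW (θ : NNParams) (l i j : ℕ) (t : ℝ) : NNParams :=
  fun l' => if l' = l then
    ((fun i' j' => if i' = i ∧ j' = j then t else (θ l).1 i' j'), (θ l).2)
  else θ l'

/-- Update a single bias entry `b^[l]_i` of the parameters. -/
def updB (θ : NNParams) (l i : ℕ) (t : ℝ) : NNParams :=
  fun l' => if l' = l then
    ((θ l).1, fun i' => if i' = i then t else (θ l).2 i')
  else θ l'

/-- `θ` is a critical point of the empirical risk: all partial derivatives with
respect to the weight and bias entries of all layers vanish. -/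
def IsCriticalPt (σ : ℝ → ℝ) (ℓ : (ℕ → ℝ) → (ℕ → ℝ) → ℝ) (m : ℕ → ℕ) (L : ℕ)
    {n : ℕ} (S : Fin n → (ℕ → ℝ) × (ℕ → ℝ)) (θ : NNParams) : Prop :=
  ∀ l, 1 ≤ l → l ≤ L →
    (∀ i < m l, ∀ j < m (l - 1),
      deriv (fun t => empRisk σ ℓ m L S (updW θ l i j t)) ((θ l).1 i j) = 0) ∧
    (∀ i < m l,
      deriv (fun t => empRisk σ ℓ m L S (updB θ l i t)) ((θ l).2 i) = 0)

/-- Feature gradients `g^[l]_θ(x)`: `g^[L] = 1` and `g^[l] = σ'(W^[l] f^[l-1] + b^[l])`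
for `l ≤ L-1`; coordinates outside the layer width are `0`. -/
noncomputable def featGrad (σ : ℝ → ℝ) (m : ℕ → ℕ) (L : ℕ) (θ : NNParams) (x : ℕ → ℝ)
    (l i : ℕ) : ℝ :=
  if i < m l then (if l = L then 1 else deriv σ (preAct σ m L θ x l i)) else 0

/-- Auxiliary downward recursion for error vectors: `errVecAux … k = z^[L-k]`. -/
noncomputable def errVecAux (σ : ℝ → ℝ) (ℓ : (ℕ → ℝ) → (ℕ → ℝ) → ℝ) (m : ℕ → ℕ) (L : ℕ)
    (θ : NNParams) (x y : ℕ → ℝ) : ℕ → ℕ → ℝ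
  | 0 => fun i =>
      if i < m L then
        deriv (fun t => ℓ (Function.update (nnOut σ m L θ x) i t) y) (nnOut σ m L θ x i)
      else 0
  | k + 1 => fun i =>
      if i < m (L - (k + 1)) then
        ∑ p ∈ Finset.range (m (L - k)),
          (θ (L - k)).1 p i * (errVecAux σ ℓ m L θ x y k p * featGrad σ m L θ x (L - k) p)
      else 0

/-- Error vectors `z^[l]_θ(x)`: `z^[L] = ∇_f ℓ(f_θ(x), y)` and
`z^[l] = (W^[l+1])ᵀ (z^[l+1] ∘ g^[l+1])`. -/
noncomputable def errVec (σ : ℝ → ℝ) (ℓ : (ℕ → ℝ) → (ℕ → ℝ) → ℝ) (m : ℕ → ℕ) (L : ℕ)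
    (θ : NNParams) (x y : ℕ → ℝ) (l : ℕ) : ℕ → ℝ :=
  errVecAux σ ℓ m L θ x y (L - l)

/-- A list of insertion positions/widths `(q, mh)` describes a valid chain of
one-layer-deeper insertions starting from widths `m` and depth `L`. -/
def ValidChain (m : ℕ → ℕ) (L : ℕ) : List (ℕ × ℕ) → Prop
  | [] => True
  | (q, mh) :: rest =>
      1 ≤ q ∧ q + 1 ≤ L ∧ min (m q) (m (q + 1)) ≤ mh ∧
        ValidChain (insertWidth m q mh) (L + 1) rest

/-- The widths obtained after performing a chain of insertions. -/
def chainWidths (m : ℕ → ℕ) : List (ℕ × ℕ) → (ℕ → ℕ)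
  | [] => m
  | (q, mh) :: rest => chainWidths (insertWidth m q mh) rest

/-- Multi-layer lifting: the composition of the one-layer liftings along a chain of
insertions. -/
def liftChain (σ : ℝ → ℝ) {n : ℕ} (S : Fin n → (ℕ → ℝ) × (ℕ → ℝ)) :
    (ℕ → ℕ) → ℕ → List (ℕ × ℕ) → NNParams → Set NNParams
  | _, _, [], θ => {θ}
  | m, L, (q, mh) :: rest, θ =>
      {θ'' | ∃ θ', θ' ∈ liftSet σ m L q mh S θ ∧
        θ'' ∈ liftChain σ S (insertWidth m q mh) (L + 1) rest θ'}

/-- `NN'` (widths `m'`, depth `L + J`) is `J`-layer deeper than `NN` (widths `m`,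
depth `L`): it is obtained by `J` successive one-layer insertions, each inserted
layer having width at least the minimum of the widths of its neighboring layers. -/
def JDeeper : ℕ → (ℕ → ℕ) → ℕ → (ℕ → ℕ) → Prop
  | 0, m, L, m' => ∀ l ≤ L, m' l = m l
  | J + 1, m, L, m' =>
      ∃ mmid, JDeeper J m L mmid ∧
        ∃ q mh, 1 ≤ q ∧ q + 1 ≤ L + J ∧ min (mmid q) (mmid (q + 1)) ≤ mh ∧
          ∀ l ≤ L + J + 1, m' l = insertWidth mmid q mh l

private lemma feat_succ (σ : ℝ → ℝ) (m : ℕ → ℕ) (L : ℕ) (θ : NNParams) (x : ℕ → ℝ)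
    (l i : ℕ) :
    feat σ m L θ x (l + 1) i
      = if i < m (l + 1) then
          (if l + 1 = L then id else σ)
            ((∑ j ∈ Finset.range (m l), (θ (l + 1)).1 i j * feat σ m L θ x l j)
              + (θ (l + 1)).2 i)
        else 0 := rfl

private lemma sum_affine_expand (N K : ℕ) (A c b u : ℕ → ℝ) (B : ℕ → ℕ → ℝ) (f : ℕ → ℝ) :
    ∑ j ∈ Finset.range N, A j * (c j * ((∑ k ∈ Finset.range K, B j k * f k) + b j) + u j)
      = (∑ k ∈ Finset.range K, (∑ j ∈ Finset.range N, A j * (c j * B j k)) * f k)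
        + ∑ j ∈ Finset.range N, A j * (c j * b j + u j) := by
  have h1 : ∀ j, A j * (c j * ((∑ k ∈ Finset.range K, B j k * f k) + b j) + u j)
      = (∑ k ∈ Finset.range K, A j * (c j * B j k) * f k) + A j * (c j * b j + u j) := by
    intro j
    have h2 : A j * (c j * ((∑ k ∈ Finset.range K, B j k * f k) + b j) + u j)
        = A j * c j * (∑ k ∈ Finset.range K, B j k * f k) + A j * (c j * b j + u j) := by ring
    rw [h2, Finset.mul_sum]
    congr 1
    exact Finset.sum_congr rfl fun k _ => by ring
  calc ∑ j ∈ Finset.range N, A j * (c j * ((∑ k ∈ Finset.range K, B j k * f k) + b j) + u j)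
      = ∑ j ∈ Finset.range N, ((∑ k ∈ Finset.range K, A j * (c j * B j k) * f k)
          + A j * (c j * b j + u j)) := Finset.sum_congr rfl fun j _ => h1 j
    _ = (∑ j ∈ Finset.range N, ∑ k ∈ Finset.range K, A j * (c j * B j k) * f k)
          + ∑ j ∈ Finset.range N, A j * (c j * b j + u j) := Finset.sum_add_distrib
    _ = (∑ k ∈ Finset.range K, ∑ j ∈ Finset.range N, A j * (c j * B j k) * f k)
          + ∑ j ∈ Finset.range N, A j * (c j * b j + u j) := by rw [Finset.sum_comm]
    _ = (∑ k ∈ Finset.range K, (∑ j ∈ Finset.range N, A j * (c j * B j k)) * f k)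
          + ∑ j ∈ Finset.range N, A j * (c j * b j + u j) := by
        congr 1
        exact Finset.sum_congr rfl fun k _ => (Finset.sum_mul _ _ _).symm

private lemma sum_swap_mul (N K : ℕ) (B c : ℕ → ℝ) (A : ℕ → ℕ → ℝ) (z : ℕ → ℝ) :
    ∑ j ∈ Finset.range N, B j * ((∑ p ∈ Finset.range K, A p j * z p) * c j)
      = ∑ p ∈ Finset.range K, (∑ j ∈ Finset.range N, A p j * (c j * B j)) * z p := by
  have h1 : ∀ j, B j * ((∑ p ∈ Finset.range K, A p j * z p) * c j)
      = ∑ p ∈ Finset.range K, A p j * (c j * B j) * z p := by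
    intro j
    rw [Finset.sum_mul, Finset.mul_sum]
    exact Finset.sum_congr rfl fun p _ => by ring
  rw [Finset.sum_congr rfl fun j _ => h1 j, Finset.sum_comm]
  exact Finset.sum_congr rfl fun p _ => (Finset.sum_mul _ _ _).symm

/-- **Error vectors under one-layer lifting.**  Assume `ℓ` and `σ` are
differentiable.  For any lifted parameter `θ'` with slope vector `lam`, on every
training input: `z^[l]_{θ'} = z^[l]_θ` for `l ∈ [q-1] ∪ [q+1:L]` (deep index `l`
resp. `l+1`), the inserted layer satisfies
`z^[q̂]_{θ'} = (W'^[q+1])ᵀ (z^[q+1]_θ ∘ g^[q+1]_θ)`, and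
`z^[q]_{θ'} = (W'^[q̂])ᵀ (z^[q̂]_{θ'} ∘ λ)`. -/
theorem error_vectors_under_lifting
    (σ : ℝ → ℝ) (ℓ : (ℕ → ℝ) → (ℕ → ℝ) → ℝ) (m : ℕ → ℕ) (L q mh : ℕ)
    (hq : 1 ≤ q) (hqL : q + 1 ≤ L)
    (hmh : min (m q) (m (q + 1)) ≤ mh)
    (hσ : Differentiable ℝ σ)
    (hℓ : ∀ (y v : ℕ → ℝ) (i : ℕ), Differentiable ℝ fun t => ℓ (Function.update v i t) y)
    {n : ℕ} (S : Fin n → (ℕ → ℝ) × (ℕ → ℝ)) (θ θ' : NNParams)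
    (lam mu aa bb : ℕ → ℝ)
    (hw : LiftWitness σ m L q mh S θ θ' lam mu aa bb) :
    ∀ i : Fin n,
      (∀ l, 1 ≤ l → l ≤ q - 1 → ∀ idx < m l,
        errVec σ ℓ (insertWidth m q mh) (L + 1) θ' (S i).1 (S i).2 l idx
          = errVec σ ℓ m L θ (S i).1 (S i).2 l idx) ∧
      (∀ l, q + 1 ≤ l → l ≤ L → ∀ idx < m l,
        errVec σ ℓ (insertWidth m q mh) (L + 1) θ' (S i).1 (S i).2 (l + 1) idx
          = errVec σ ℓ m L θ (S i).1 (S i).2 l idx) ∧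
      (∀ j < mh,
        errVec σ ℓ (insertWidth m q mh) (L + 1) θ' (S i).1 (S i).2 (q + 1) j
          = ∑ p ∈ Finset.range (m (q + 1)), (θ' (q + 2)).1 p j *
              (errVec σ ℓ m L θ (S i).1 (S i).2 (q + 1) p
                * featGrad σ m L θ (S i).1 (q + 1) p)) ∧
      (∀ k < m q,
        errVec σ ℓ (insertWidth m q mh) (L + 1) θ' (S i).1 (S i).2 q k
          = ∑ j ∈ Finset.range mh, (θ' (q + 1)).1 j k *
              (errVec σ ℓ (insertWidth m q mh) (L + 1) θ' (S i).1 (S i).2 (q + 1) j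
                * lam j)) := by
  obtain ⟨⟨hloc1, hloc2⟩, hlin, hout1, hout2⟩ := hw
  intro i
  set x := (S i).1 with hxdef
  set y := (S i).2 with hydef
  set m' := insertWidth m q mh with hm'
  have hwle : ∀ l, l ≤ q → m' l = m l := by
    intro l hl; simp [hm', insertWidth, hl]
  have hwq1 : m' (q+1) = mh := by
    simp [hm', insertWidth]
  have hwge : ∀ l, q+2 ≤ l → m' l = m (l-1) := by
    intro l hl
    simp only [hm', insertWidth]
    rw [if_neg (by omega), if_neg (by omega)]
  -- features at layers ≤ q are unchanged
  have featA : ∀ l, l ≤ q → ∀ idx, feat σ m' (L+1) θ' x l idx = feat σ m L θ x l idx := by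
    intro l
    induction l with
    | zero => intro _ idx; simp [feat, hwle 0 (by omega)]
    | succ l ih =>
      intro hl idx
      simp only [feat]
      rw [hwle (l+1) hl, hwle l (by omega)]
      by_cases hidx : idx < m (l+1)
      · rw [if_pos hidx, if_pos hidx, if_neg (show ¬(l+1 = L+1) by omega),
          if_neg (show ¬(l+1 = L) by omega)]
        congr 2
        · refine Finset.sum_congr rfl fun j hj => ?_
          rw [Finset.mem_range] at hj
          rw [(hloc1 (l+1) (by omega) hl).1 idx hidx j hj, ih (by omega) j]
        · exact (hloc1 (l+1) (by omega) hl).2 idx hidx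
      · rw [if_neg hidx, if_neg hidx]
  -- pre-activation of the inserted layer
  have hpre1 : ∀ j, preAct σ m' (L+1) θ' x (q+1) j
      = (∑ k ∈ Finset.range (m q), (θ' (q+1)).1 j k * feat σ m L θ x q k) + (θ' (q+1)).2 j := by
    intro j
    simp only [preAct, Nat.add_sub_cancel]
    rw [hwle q le_rfl]
    congr 1
    exact Finset.sum_congr rfl fun k _ => by rw [featA q le_rfl k]
  -- features of the inserted layer are affine in the pre-activation
  have featQ1 : ∀ j < mh, feat σ m' (L+1) θ' x (q+1) j
      = lam j * preAct σ m' (L+1) θ' x (q+1) j + mu j := by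
    intro j hj
    obtain ⟨⟨hab, hl0, haff⟩, hmem⟩ := hlin j hj
    have hmem' := hmem i
    rw [← hxdef] at hmem'
    simp only [feat]
    rw [hwq1, if_pos hj, if_neg (show ¬(q+1 = L+1) by omega)]
    have hpa : ((∑ k ∈ Finset.range (m' q), (θ' (q+1)).1 j k * feat σ m' (L+1) θ' x q k)
        + (θ' (q+1)).2 j) = preAct σ m' (L+1) θ' x (q+1) j := by
      simp only [preAct, Nat.add_sub_cancel]
    rw [hpa]
    exact haff _ hmem'
  -- unfolded form of the pre-activation identity at layer q+2
  have hpre2' : ∀ p < m (q+1),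
      (∑ j ∈ Finset.range mh, (θ' (q+2)).1 p j * feat σ m' (L+1) θ' x (q+1) j) + (θ' (q+2)).2 p
      = (∑ k ∈ Finset.range (m q), (θ (q+1)).1 p k * feat σ m L θ x q k) + (θ (q+1)).2 p := by
    intro p hp
    have step1 : ∀ j ∈ Finset.range mh, (θ' (q+2)).1 p j * feat σ m' (L+1) θ' x (q+1) j
        = (θ' (q+2)).1 p j * (lam j *
            ((∑ k ∈ Finset.range (m q), (θ' (q+1)).1 j k * feat σ m L θ x q k)
              + (θ' (q+1)).2 j) + mu j) := by
      intro j hj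
      rw [Finset.mem_range] at hj
      rw [featQ1 j hj, hpre1 j]
    rw [Finset.sum_congr rfl step1,
      sum_affine_expand mh (m q) (fun j => (θ' (q+2)).1 p j) lam (fun j => (θ' (q+1)).2 j) mu
        (fun j k => (θ' (q+1)).1 j k) (fun k => feat σ m L θ x q k), add_assoc]
    congr 1
    · refine Finset.sum_congr rfl fun k hk => ?_
      rw [Finset.mem_range] at hk
      rw [hout1 p hp k hk]
    · exact hout2 p hp
  have hpre2 : ∀ p < m (q+1), preAct σ m' (L+1) θ' x (q+2) p = preAct σ m L θ x (q+1) p := by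
    intro p hp
    have h := hpre2' p hp
    simp only [preAct]
    rw [show q+2-1 = q+1 from rfl, show q+1-1 = q from rfl, hwq1]
    exact h
  -- features at layers ≥ q+1 (deep index l+1) are unchanged
  have featD : ∀ l, q+1 ≤ l → l ≤ L → ∀ idx,
      feat σ m' (L+1) θ' x (l+1) idx = feat σ m L θ x l idx := by
    intro l hl
    induction l, hl using Nat.le_induction with
    | base =>
      intro _ idx
      conv_lhs => rw [feat_succ]
      conv_rhs => rw [feat_succ]
      rw [hwge (q+1+1) (by omega), show q+1+1-1 = q+1 from rfl, hwq1,
        show (q+1+1 : ℕ) = q+2 from rfl]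
      by_cases hidx : idx < m (q+1)
      · rw [if_pos hidx, if_pos hidx]
        by_cases hT : q+1 = L
        · rw [if_pos (show q+2 = L+1 by omega), if_pos hT]
          simpa using hpre2' idx hidx
        · rw [if_neg (show ¬(q+2 = L+1) by omega), if_neg hT]
          exact congrArg σ (hpre2' idx hidx)
      · rw [if_neg hidx, if_neg hidx]
    | succ l hl ih =>
      intro hL idx
      have ih' := ih (by omega)
      conv_lhs => rw [feat_succ]
      conv_rhs => rw [feat_succ]
      rw [hwge (l+1+1) (by omega), show l+1+1-1 = l+1 from rfl, hwge (l+1) (by omega),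
        show l+1-1 = l from rfl]
      by_cases hidx : idx < m (l+1)
      · rw [if_pos hidx, if_pos hidx]
        have hw' := hloc2 (l+1+1) (by omega) (by omega)
        have heq : ((∑ j' ∈ Finset.range (m l), (θ' (l+1+1)).1 idx j'
              * feat σ m' (L+1) θ' x (l+1) j') + (θ' (l+1+1)).2 idx)
            = ((∑ j' ∈ Finset.range (m l), (θ (l+1)).1 idx j' * feat σ m L θ x l j')
              + (θ (l+1)).2 idx) := by
          congr 1
          · refine Finset.sum_congr rfl fun j' hj' => ?_
            rw [Finset.mem_range] at hj'
            rw [hw'.1 idx hidx j' hj', ih' j']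
            rfl
          · exact hw'.2 idx hidx
        rw [heq]
        by_cases hT : l+1 = L
        · rw [if_pos (show l+1+1 = L+1 by omega), if_pos hT]
        · rw [if_neg (show ¬(l+1+1 = L+1) by omega), if_neg hT]
      · rw [if_neg hidx, if_neg hidx]
  have hnn : nnOut σ m' (L+1) θ' x = nnOut σ m L θ x := by
    funext idx
    exact featD L (by omega) le_rfl idx
  -- feature gradients at low layers
  have hpreLow : ∀ l, 1 ≤ l → l ≤ q → ∀ p < m l,
      preAct σ m' (L+1) θ' x l p = preAct σ m L θ x l p := by
    intro l h1 h2 p hp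
    simp only [preAct]
    rw [hwle (l-1) (by omega)]
    congr 1
    · refine Finset.sum_congr rfl fun k hk => ?_
      rw [Finset.mem_range] at hk
      rw [(hloc1 l h1 h2).1 p hp k hk, featA (l-1) (by omega) k]
    · exact (hloc1 l h1 h2).2 p hp
  have hGlow : ∀ l, 1 ≤ l → l ≤ q → ∀ p,
      featGrad σ m' (L+1) θ' x l p = featGrad σ m L θ x l p := by
    intro l h1 h2 p
    simp only [featGrad]
    rw [hwle l h2]
    by_cases hp : p < m l
    · rw [if_pos hp, if_pos hp, if_neg (show ¬(l = L+1) by omega),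
        if_neg (show ¬(l = L) by omega), hpreLow l h1 h2 p hp]
    · rw [if_neg hp, if_neg hp]
  -- pre-activations and feature gradients at high layers
  have hpreHigh : ∀ l, q+1 ≤ l → l ≤ L → ∀ p < m l,
      preAct σ m' (L+1) θ' x (l+1) p = preAct σ m L θ x l p := by
    intro l h1 h2 p hp
    rcases Nat.eq_or_lt_of_le h1 with h | h
    · have hlq : l = q+1 := h.symm
      subst hlq
      exact hpre2 p hp
    · simp only [preAct]
      rw [show l+1-1 = l from rfl, hwge l (by omega)]
      have hw' := hloc2 (l+1) (by omega) (by omega)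
      congr 1
      · refine Finset.sum_congr rfl fun k hk => ?_
        rw [Finset.mem_range] at hk
        rw [hw'.1 p hp k hk]
        have hfd := featD (l-1) (by omega) (by omega) k
        rw [show l-1+1 = l from by omega] at hfd
        rw [hfd]
        rfl
      · exact hw'.2 p hp
  have hGhigh : ∀ l, q+1 ≤ l → l ≤ L → ∀ p < m l,
      featGrad σ m' (L+1) θ' x (l+1) p = featGrad σ m L θ x l p := by
    intro l h1 h2 p hp
    simp only [featGrad]
    rw [hwge (l+1) (by omega), show l+1-1 = l from rfl, if_pos hp, if_pos hp]
    by_cases hT : l = L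
    · rw [if_pos (show l+1 = L+1 by omega), if_pos hT]
    · rw [if_neg (show ¬(l+1 = L+1) by omega), if_neg hT, hpreHigh l h1 h2 p hp]
  -- the derivative of σ at the inserted layer's pre-activation is the slope
  have hderiv : ∀ j < mh, deriv σ (preAct σ m' (L+1) θ' x (q+1) j) = lam j := by
    intro j hj
    obtain ⟨⟨hab, hl0, haff⟩, hmem⟩ := hlin j hj
    have hmem' := hmem i
    rw [← hxdef] at hmem'
    have hev : σ =ᶠ[nhds (preAct σ m' (L+1) θ' x (q+1) j)] fun t => lam j * t + mu j := by
      filter_upwards [Ioo_mem_nhds hmem'.1 hmem'.2] with t ht using haff t ht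
    rw [hev.deriv_eq]
    have hda : HasDerivAt (fun t : ℝ => lam j * t + mu j) (lam j)
        (preAct σ m' (L+1) θ' x (q+1) j) := by
      simpa using ((hasDerivAt_id (preAct σ m' (L+1) θ' x (q+1) j)).const_mul (lam j)).add_const
        (mu j)
    exact hda.deriv
  -- top error vector
  have errTop : ∀ idx, errVecAux σ ℓ m' (L+1) θ' x y 0 idx = errVecAux σ ℓ m L θ x y 0 idx := by
    intro idx
    simp only [errVecAux]
    rw [hwge (L+1) (by omega), show L+1-1 = L from rfl, hnn]
  -- error vectors at high layers
  have errE : ∀ d, d ≤ L - q - 1 → ∀ idx,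
      errVecAux σ ℓ m' (L+1) θ' x y d idx = errVecAux σ ℓ m L θ x y d idx := by
    intro d
    induction d with
    | zero => intro _ idx; exact errTop idx
    | succ d ih =>
      intro hd idx
      simp only [errVecAux]
      rw [show (L+1) - (d+1) = L-(d+1)+1 from by omega,
        show (L+1) - d = L-(d+1)+1+1 from by omega,
        show L - d = L-(d+1)+1 from by omega,
        hwge (L-(d+1)+1) (by omega), show L-(d+1)+1-1 = L-(d+1) from rfl,
        hwge (L-(d+1)+1+1) (by omega), show L-(d+1)+1+1-1 = L-(d+1)+1 from rfl]
      by_cases hidx : idx < m (L-(d+1))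
      · rw [if_pos hidx, if_pos hidx]
        refine Finset.sum_congr rfl fun p hp => ?_
        rw [Finset.mem_range] at hp
        have hw' := hloc2 (L-(d+1)+1+1) (by omega) (by omega)
        rw [hw'.1 p hp idx hidx, ih (by omega) p,
          hGhigh (L-(d+1)+1) (by omega) (by omega) p hp]
        rfl
      · rw [if_neg hidx, if_neg hidx]
  -- the inserted layer (deep index q+1)
  have b3 : ∀ j < mh, errVec σ ℓ m' (L+1) θ' x y (q+1) j
      = ∑ p ∈ Finset.range (m (q+1)), (θ' (q+2)).1 p j *
          (errVec σ ℓ m L θ x y (q+1) p * featGrad σ m L θ x (q+1) p) := by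
    intro j hj
    show errVecAux σ ℓ m' (L+1) θ' x y ((L+1)-(q+1)) j = _
    rw [show (L+1)-(q+1) = (L-(q+1))+1 from by omega]
    simp only [errVecAux]
    rw [show (L+1) - ((L-(q+1))+1) = q+1 from by omega,
      show (L+1) - (L-(q+1)) = q+1+1 from by omega,
      hwq1, if_pos hj, hwge (q+1+1) (by omega), show q+1+1-1 = q+1 from rfl]
    refine Finset.sum_congr rfl fun p hp => ?_
    rw [Finset.mem_range] at hp
    rw [show (q+1+1 : ℕ) = q+2 from rfl]
    congr 1
    congr 1
    · rw [errE (L-(q+1)) (by omega) p]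
      rfl
    · have := hGhigh (q+1) (by omega) hqL p hp
      rw [show (q+1+1 : ℕ) = q+2 from rfl] at this
      exact this
  -- layer q of the deep network
  have b4 : ∀ k < m q, errVec σ ℓ m' (L+1) θ' x y q k
      = ∑ j ∈ Finset.range mh, (θ' (q+1)).1 j k *
          (errVec σ ℓ m' (L+1) θ' x y (q+1) j * lam j) := by
    intro k hk
    show errVecAux σ ℓ m' (L+1) θ' x y ((L+1)-q) k = _
    rw [show (L+1)-q = (L-q)+1 from by omega]
    simp only [errVecAux]
    rw [show (L+1) - ((L-q)+1) = q from by omega, show (L+1) - (L-q) = q+1 from by omega,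
      hwle q le_rfl, if_pos hk, hwq1]
    refine Finset.sum_congr rfl fun j hj => ?_
    rw [Finset.mem_range] at hj
    congr 1
    congr 1
    · show _ = errVecAux σ ℓ m' (L+1) θ' x y ((L+1)-(q+1)) j
      rw [show (L+1)-(q+1) = L-q from by omega]
    · simp only [featGrad]
      rw [hwq1, if_pos hj, if_neg (show ¬(q+1 = L+1) by omega)]
      exact hderiv j hj
  -- error vectors agree at layer q
  have bG : ∀ k < m q, errVec σ ℓ m' (L+1) θ' x y q k = errVec σ ℓ m L θ x y q k := by
    intro k hk
    rw [b4 k hk]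
    have hrhs : errVec σ ℓ m L θ x y q k
        = ∑ p ∈ Finset.range (m (q+1)), (θ (q+1)).1 p k *
            (errVec σ ℓ m L θ x y (q+1) p * featGrad σ m L θ x (q+1) p) := by
      show errVecAux σ ℓ m L θ x y (L-q) k = _
      rw [show L-q = (L-(q+1))+1 from by omega]
      simp only [errVecAux]
      rw [show L - ((L-(q+1))+1) = q from by omega, show L - (L-(q+1)) = q+1 from by omega,
        if_pos hk]
      exact Finset.sum_congr rfl fun p _ => rfl
    rw [hrhs]
    calc ∑ j ∈ Finset.range mh, (θ' (q+1)).1 j k *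
          (errVec σ ℓ m' (L+1) θ' x y (q+1) j * lam j)
        = ∑ j ∈ Finset.range mh, (θ' (q+1)).1 j k *
            ((∑ p ∈ Finset.range (m (q+1)), (θ' (q+2)).1 p j *
              (errVec σ ℓ m L θ x y (q+1) p * featGrad σ m L θ x (q+1) p)) * lam j) := by
          refine Finset.sum_congr rfl fun j hj => ?_
          rw [Finset.mem_range] at hj
          rw [b3 j hj]
      _ = ∑ p ∈ Finset.range (m (q+1)),
            (∑ j ∈ Finset.range mh, (θ' (q+2)).1 p j * (lam j * (θ' (q+1)).1 j k)) *
              (errVec σ ℓ m L θ x y (q+1) p * featGrad σ m L θ x (q+1) p) :=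
          sum_swap_mul mh (m (q+1)) (fun j => (θ' (q+1)).1 j k) lam
            (fun p j => (θ' (q+2)).1 p j)
            (fun p => errVec σ ℓ m L θ x y (q+1) p * featGrad σ m L θ x (q+1) p)
      _ = ∑ p ∈ Finset.range (m (q+1)), (θ (q+1)).1 p k *
            (errVec σ ℓ m L θ x y (q+1) p * featGrad σ m L θ x (q+1) p) := by
          refine Finset.sum_congr rfl fun p hp => ?_
          rw [Finset.mem_range] at hp
          rw [hout1 p hp k hk]
  -- error vectors agree at low layers
  have errLow : ∀ d l, l + d = q → 1 ≤ l → ∀ idx < m l,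
      errVec σ ℓ m' (L+1) θ' x y l idx = errVec σ ℓ m L θ x y l idx := by
    intro d
    induction d with
    | zero =>
      intro l hl _ idx hidx
      have hlq : l = q := by omega
      subst hlq
      exact bG idx hidx
    | succ d ih =>
      intro l hl h1 idx hidx
      have hlq : l + 1 ≤ q := by omega
      show errVecAux σ ℓ m' (L+1) θ' x y ((L+1)-l) idx = errVecAux σ ℓ m L θ x y (L-l) idx
      conv_lhs => rw [show (L+1)-l = (L-l)+1 from by omega]
      conv_rhs => rw [show L-l = (L-(l+1))+1 from by omega]
      simp only [errVecAux]
      rw [show (L+1) - ((L-l)+1) = l from by omega, show (L+1) - (L-l) = l+1 from by omega,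
        show L - ((L-(l+1))+1) = l from by omega, show L - (L-(l+1)) = l+1 from by omega,
        hwle l (by omega), hwle (l+1) hlq, if_pos hidx, if_pos hidx]
      refine Finset.sum_congr rfl fun p hp => ?_
      rw [Finset.mem_range] at hp
      rw [(hloc1 (l+1) (by omega) hlq).1 p hp idx hidx]
      congr 1
      congr 1
      · have h5 : errVec σ ℓ m' (L+1) θ' x y (l+1) p
            = errVecAux σ ℓ m' (L+1) θ' x y (L-l) p := by
          show errVecAux σ ℓ m' (L+1) θ' x y ((L+1)-(l+1)) p = _
          rw [show (L+1)-(l+1) = L-l from by omega]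
        rw [← h5, ih (l+1) (by omega) (by omega) p hp]
        rfl
      · exact hGlow (l+1) (by omega) hlq p
  refine ⟨?_, ?_, ?_, ?_⟩
  · intro l h1 h2 idx hidx
    exact errLow (q-l) l (by omega) h1 idx hidx
  · intro l h1 h2 idx hidx
    show errVecAux σ ℓ m' (L+1) θ' x y ((L+1)-(l+1)) idx = errVecAux σ ℓ m L θ x y (L-l) idx
    rw [show (L+1)-(l+1) = L-l from by omega]
    exact errE (L-l) (by omega) idx
  · exact b3
  · exact b4
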